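/- arXiv:math/0611859 — 5 statements merged into one kernel-verified Lean document; each statement's English description precedes it below -/
import Mathlib

section
/- Let p, q be integers with 1 ≤ p ≤ q−1 and gcd(p,q) = 1, and let N = ℤ³ + ℤ·(1/q)(1, p, q−p) ⊆ ℝ³. Then min{ x₁ + x₂ + x₃ : x ∈ N, all xᵢ > 0 } = 1 + 1/q. -/
/-- A positive integer is at least its residue mod `q`. -/
lemma pos_ge_emod (q m : ℤ) (hq : 0 < q) (hm : 0 < m) : m % q ≤ m := by
  have h1 := Int.emod_add_mul_ediv m q
  have h2 : 0 ≤ m / q := Int.ediv_nonneg hm.le hq.le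
  nlinarith

/-- For the lattice `N = ℤ³ + ℤ·(1/q)(1,p,q-p)` of a terminal 3-fold cyclic quotient
singularity, `min{x₁+x₂+x₃ : x ∈ N, all xᵢ > 0} = 1 + 1/q`. -/
theorem mld_terminal_threefold (p q : ℕ) (hp1 : 1 ≤ p) (hpq : p ≤ q - 1)
    (hgcd : Nat.gcd p q = 1)
    (N : Set (Fin 3 → ℝ))
    (hN : N = {x : Fin 3 → ℝ | ∃ a : Fin 3 → ℤ, ∃ n : ℤ,
      x 0 = a 0 + n * 1 / q ∧ x 1 = a 1 + n * p / q ∧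
      x 2 = a 2 + n * ((q : ℝ) - p) / q}) :
    IsLeast {s : ℝ | ∃ x ∈ N, (∀ i, 0 < x i) ∧ s = x 0 + x 1 + x 2}
      (1 + 1 / q) := by
  have hpq' : p < q := by omega
  have hq2 : 2 ≤ q := by omega
  have hq0 : (0:ℝ) < q := by exact_mod_cast (by omega : 0 < q)
  have hqZ : (0:ℤ) < q := by exact_mod_cast (by omega : 0 < q)
  constructor
  · -- membership: x = (1/q, p/q, (q-p)/q)
    refine ⟨![1/q, (p:ℝ)/q, ((q:ℝ)-p)/q], ?_, ?_, ?_⟩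
    · rw [hN]
      refine ⟨0, 1, ?_, ?_, ?_⟩ <;> simp
    · intro i
      fin_cases i <;> simp
      · positivity
      · positivity
      · apply div_pos _ hq0
        have : (p:ℝ) < q := by exact_mod_cast hpq'
        linarith
    · simp only [Matrix.cons_val_zero, Matrix.cons_val_one, Matrix.head_cons,
        Matrix.cons_val_two, Matrix.tail_cons]
      field_simp
      ring
  · -- lower bound
    rintro s ⟨x, hx, hpos, hs⟩
    rw [hN] at hx
    obtain ⟨a, n, h0, h1, h2⟩ := hx
    set m0 : ℤ := q * a 0 + n with hm0
    set m1 : ℤ := q * a 1 + n * p with hm1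
    set m2 : ℤ := q * a 2 + n * ((q:ℤ) - p) with hm2
    have e0 : x 0 = (m0:ℝ) / q := by rw [h0, hm0]; push_cast; field_simp
    have e1 : x 1 = (m1:ℝ) / q := by rw [h1, hm1]; push_cast; field_simp
    have e2 : x 2 = (m2:ℝ) / q := by rw [h2, hm2]; push_cast; field_simp
    have p0 : 0 < m0 := by
      have h := hpos 0; rw [e0] at h
      have : (0:ℝ) < (m0:ℝ) := by
        by_contra hc; push_neg at hc
        have : (m0:ℝ)/q ≤ 0 := div_nonpos_of_nonpos_of_nonneg hc hq0.le
        linarith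
      exact_mod_cast this
    have p1 : 0 < m1 := by
      have h := hpos 1; rw [e1] at h
      have : (0:ℝ) < (m1:ℝ) := by
        by_contra hc; push_neg at hc
        have : (m1:ℝ)/q ≤ 0 := div_nonpos_of_nonpos_of_nonneg hc hq0.le
        linarith
      exact_mod_cast this
    have p2 : 0 < m2 := by
      have h := hpos 2; rw [e2] at h
      have : (0:ℝ) < (m2:ℝ) := by
        by_contra hc; push_neg at hc
        have : (m2:ℝ)/q ≤ 0 := div_nonpos_of_nonpos_of_nonneg hc hq0.le
        linarith
      exact_mod_cast this
    -- key integer inequality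
    have key : (q:ℤ) + 1 ≤ m0 + m1 + m2 := by
      set k : ℤ := n % q with hk
      have hk0 : 0 ≤ k := Int.emod_nonneg n (by omega)
      have hkq : k < q := Int.emod_lt_of_pos n hqZ
      by_cases hkz : k = 0
      · -- q divides n, hence each mᵢ
        have hdn : (q:ℤ) ∣ n := Int.dvd_of_emod_eq_zero hkz
        have d0 : (q:ℤ) ∣ m0 := by rw [hm0]; exact dvd_add (Dvd.intro _ rfl) hdn
        have d1 : (q:ℤ) ∣ m1 := by rw [hm1]; exact dvd_add (Dvd.intro _ rfl) (hdn.mul_right _)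
        have d2 : (q:ℤ) ∣ m2 := by rw [hm2]; exact dvd_add (Dvd.intro _ rfl) (hdn.mul_right _)
        have l0 := Int.le_of_dvd p0 d0
        have l1 := Int.le_of_dvd p1 d1
        have l2 := Int.le_of_dvd p2 d2
        omega
      · have r0 : m0 % q = k := by
          have h : m0 = n + (q:ℤ) * a 0 := by rw [hm0]; ring
          rw [h, Int.add_mul_emod_self_left, hk]
        have r1 : m1 % q = (n * p) % q := by
          have h : m1 = n * (p:ℤ) + (q:ℤ) * a 1 := by rw [hm1]; ring
          rw [h, Int.add_mul_emod_self_left]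
        have r2 : m2 % q = (n * ((q:ℤ) - p)) % q := by
          have h : m2 = n * ((q:ℤ) - p) + (q:ℤ) * a 2 := by rw [hm2]; ring
          rw [h, Int.add_mul_emod_self_left]
        set r : ℤ := (n * p) % q with hr
        have hr0 : 0 ≤ r := Int.emod_nonneg _ (by omega)
        have hrq : r < q := Int.emod_lt_of_pos _ hqZ
        have hrne : r ≠ 0 := by
          intro hrz
          have hd : (q:ℤ) ∣ n * p := Int.dvd_of_emod_eq_zero hrz
          have hcop : IsCoprime (q:ℤ) (p:ℤ) := by
            rw [Int.isCoprime_iff_gcd_eq_one]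
            simpa [Int.gcd_natCast_natCast, Nat.gcd_comm] using hgcd
          have hdk : (q:ℤ) ∣ n := hcop.dvd_of_dvd_mul_right hd
          have : n % q = 0 := Int.emod_eq_zero_of_dvd hdk
          omega
        have r2' : m2 % q = q - r := by
          have hh := Int.emod_add_mul_ediv (n * (p:ℤ)) q
          have hdv : m2 - ((q:ℤ) - r) = q * (a 2 + n - 1 - n * p / q) := by
            rw [hm2, hr]; linear_combination hh
          have heq : m2 % q = ((q:ℤ) - r) % q :=
            Int.emod_eq_emod_iff_emod_sub_eq_zero.mpr
              (by rw [hdv]; simp [Int.mul_emod_right])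
          rw [heq]; exact Int.emod_eq_of_lt (by omega) (by omega)
        have l0 : k ≤ m0 := r0 ▸ pos_ge_emod q m0 hqZ p0
        have l1 : r ≤ m1 := (r1.trans hr.symm) ▸ pos_ge_emod q m1 hqZ p1
        have l2 : (q:ℤ) - r ≤ m2 := r2' ▸ pos_ge_emod q m2 hqZ p2
        omega
    -- conclude
    have hM : ((q:ℝ) + 1) ≤ (m0:ℝ) + m1 + m2 := by exact_mod_cast key
    rw [hs, e0, e1, e2, ← add_div, ← add_div]
    have heq : (1:ℝ) + 1/q = ((q:ℝ)+1)/q := by field_simp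
    rw [heq]
    gcongr
end

section
/- Let N ⊆ ℝ^d be a lattice containing ℤ^d, b₁,…,b_d ∈ [0,1] with some bᵢ < 1, and set Δ = { x ∈ ℝ^d : xᵢ ≥ 0 for all i, Σᵢ(1−bᵢ)xᵢ ≤ 1 }. Then min{ Σᵢ(1−bᵢ)xᵢ : x ∈ N, all xᵢ > 0 } = sup{ t ≥ 0 : N ∩ int(tΔ) = ∅ }, where int denotes the interior and tΔ is the dilation of Δ by factor t. -/
open Pointwise

/-- The toric minimal log discrepancy equals the first Minkowski-type minimum of the
simplex `Δ = {x : xᵢ ≥ 0, Σ(1-bᵢ)xᵢ ≤ 1}` with respect to the lattice `N`: if `a` is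
the minimum of `Σ(1-bᵢ)xᵢ` over `N ∩ int σ`, then
`a = sup{t ≥ 0 : N ∩ int(tΔ) = ∅}`. -/
theorem toric_mld_eq_minkowski_minimum (d : ℕ)
    (N : AddSubgroup (Fin d → ℝ))
    (hZ : ∀ m : Fin d → ℤ, (fun i => (m i : ℝ)) ∈ N)
    (hdisc : {x : Fin d → ℝ | x ∈ N ∧ ∀ i, 0 ≤ x i ∧ x i ≤ 1}.Finite)
    (b : Fin d → ℝ) (hb : ∀ i, 0 ≤ b i ∧ b i ≤ 1) (hb1 : ∃ i, b i < 1)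
    (Δ : Set (Fin d → ℝ))
    (hΔ : Δ = {x : Fin d → ℝ | (∀ i, 0 ≤ x i) ∧ ∑ i, (1 - b i) * x i ≤ 1})
    (a : ℝ)
    (ha : IsLeast {s : ℝ | ∃ x ∈ N, (∀ i, 0 < x i) ∧ s = ∑ i, (1 - b i) * x i} a) :
    IsLUB {t : ℝ | 0 ≤ t ∧ (N : Set (Fin d → ℝ)) ∩ interior (t • Δ) = ∅} a := by
  obtain ⟨haS, halb⟩ := ha
  obtain ⟨x₀, hx₀N, hx₀pos, hx₀a⟩ := haS
  obtain ⟨j, hj⟩ := hb1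
  have hcj : 0 < 1 - b j := by linarith
  have hcnn : ∀ i, 0 ≤ 1 - b i := fun i => by linarith [(hb i).2]
  -- a > 0
  have hapos : 0 < a := by
    rw [hx₀a]
    calc 0 < (1 - b j) * x₀ j := mul_pos hcj (hx₀pos j)
      _ ≤ ∑ i, (1 - b i) * x₀ i :=
        Finset.single_le_sum (fun i _ => mul_nonneg (hcnn i) (hx₀pos i).le)
          (Finset.mem_univ j)
  -- sum after updating one coordinate
  have hupd : ∀ (x : Fin d → ℝ) (v : ℝ),
      ∑ i, (1 - b i) * Function.update x j v i
        = ∑ i, (1 - b i) * x i + (1 - b j) * (v - x j) := by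
    intro x v
    have key : ∀ i ∈ Finset.univ, (1 - b i) * Function.update x j v i
        = (1 - b i) * x i + (if i = j then (1 - b j) * (v - x j) else 0) := by
      intro i _
      rcases eq_or_ne i j with rfl | h
      · simp [Function.update_self]; ring
      · simp [Function.update_of_ne h, h]
    rw [Finset.sum_congr rfl key, Finset.sum_add_distrib,
      Finset.sum_ite_eq' Finset.univ j]
    simp
  -- interior of the closed region is in the strict region
  have hCint : interior {x : Fin d → ℝ | (∀ i, 0 ≤ x i) ∧ ∑ i, (1 - b i) * x i ≤ a}
      ⊆ {x | (∀ i, 0 < x i) ∧ ∑ i, (1 - b i) * x i < a} := by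
    intro x hx
    rw [mem_interior_iff_mem_nhds, Metric.mem_nhds_iff] at hx
    obtain ⟨ε, hε, hball⟩ := hx
    have hmem : ∀ v : Fin d → ℝ, dist v x < ε →
        (∀ i, 0 ≤ v i) ∧ ∑ i, (1 - b i) * v i ≤ a := fun v hv =>
      hball (Metric.mem_ball.mpr hv)
    have hbd : ∀ (k : Fin d) (w : ℝ), |w| < ε → dist (Function.update x k (x k + w)) x < ε := by
      intro k w hw
      rw [dist_pi_lt_iff hε]
      intro i
      rcases eq_or_ne i k with rfl | hik
      · simp only [Function.update_self, Real.dist_eq]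
        simpa using hw
      · simpa [Function.update_of_ne hik] using hε
    constructor
    · intro i
      have h := hmem (Function.update x i (x i + (-(ε/2)))) (hbd i _ (by rw [abs_neg]; rw [abs_of_pos (half_pos hε)]; linarith))
      have h1 := h.1 i
      rw [Function.update_self] at h1
      linarith
    · have h := hmem (Function.update x j (x j + ε/2)) (hbd j _ (by rw [abs_of_pos (half_pos hε)]; linarith))
      have hs := h.2
      rw [hupd] at hs
      have hx' : x j + ε / 2 - x j = ε / 2 := by ring
      rw [hx'] at hs
      nlinarith [mul_pos hcj (half_pos hε)]
  -- for 0 ≤ t ≤ a, interior (t • Δ) is in the strict region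
  have hsub : ∀ t : ℝ, 0 ≤ t → t ≤ a →
      interior (t • Δ) ⊆ {x | (∀ i, 0 < x i) ∧ ∑ i, (1 - b i) * x i < a} := by
    intro t ht hta
    refine (interior_mono ?_).trans hCint
    rintro z hz
    obtain ⟨y, hy, rfl⟩ := hz
    rw [hΔ] at hy
    obtain ⟨hy0, hy1⟩ := hy
    constructor
    · intro i
      exact mul_nonneg ht (hy0 i)
    · have : ∑ i, (1 - b i) * (t • y) i = t * ∑ i, (1 - b i) * y i := by
        rw [Finset.mul_sum]
        exact Finset.sum_congr rfl fun i _ => by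
          simp [Pi.smul_apply, smul_eq_mul]; ring
      rw [this]
      calc t * ∑ i, (1 - b i) * y i ≤ t * 1 := mul_le_mul_of_nonneg_left hy1 ht
        _ = t := mul_one t
        _ ≤ a := hta
  -- the strict open region at level t is inside interior (t • Δ)
  have hopensub : ∀ t : ℝ, 0 < t →
      {x : Fin d → ℝ | (∀ i, 0 < x i) ∧ ∑ i, (1 - b i) * x i < t} ⊆ interior (t • Δ) := by
    intro t ht
    apply interior_maximal
    · intro x hx
      obtain ⟨hx0, hxs⟩ := hx
      refine ⟨t⁻¹ • x, ?_, smul_inv_smul₀ ht.ne' x⟩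
      rw [hΔ]
      constructor
      · intro i
        exact mul_nonneg (inv_nonneg.mpr ht.le) (hx0 i).le
      · have : ∑ i, (1 - b i) * (t⁻¹ • x) i = t⁻¹ * ∑ i, (1 - b i) * x i := by
          rw [Finset.mul_sum]
          exact Finset.sum_congr rfl fun i _ => by
            simp [Pi.smul_apply, smul_eq_mul]; ring
        rw [this]
        rw [inv_mul_le_iff₀ ht, mul_one]
        exact hxs.le
    · have h1 : IsOpen {x : Fin d → ℝ | ∀ i, 0 < x i} := by
        have : {x : Fin d → ℝ | ∀ i, 0 < x i} = ⋂ i, {x | 0 < x i} := by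
          ext x; simp
        rw [this]
        exact isOpen_iInter_of_finite fun i =>
          isOpen_lt continuous_const (continuous_apply i)
      have h2 : IsOpen {x : Fin d → ℝ | ∑ i, (1 - b i) * x i < t} :=
        isOpen_lt (continuous_finset_sum _ fun i _ =>
          continuous_const.mul (continuous_apply i)) continuous_const
      exact h1.inter h2
  constructor
  · -- a is an upper bound
    rintro t ⟨ht0, hemp⟩
    by_contra h
    push_neg at h
    have hx₀mem : x₀ ∈ interior (t • Δ) := by
      apply hopensub t (hapos.trans h)
      exact ⟨hx₀pos, by rw [← hx₀a]; exact h⟩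
    rw [Set.eq_empty_iff_forall_notMem] at hemp
    exact hemp x₀ ⟨hx₀N, hx₀mem⟩
  · -- a is ≤ any upper bound
    intro u hu
    apply hu
    refine ⟨hapos.le, ?_⟩
    rw [Set.eq_empty_iff_forall_notMem]
    rintro x ⟨hxN, hxint⟩
    obtain ⟨hxpos, hxlt⟩ := hsub a hapos.le le_rfl hxint
    have := halb ⟨x, hxN, hxpos, rfl⟩
    linarith
end

section
/- Let x ∈ ℚ^d ∩ (0,1]^d, let N = ℤ^d + ℤ·x, and let n_j be defined as gcd(q,qx₁,…,q̂xⱼ,…,qx_d)/gcd(q,qx₁,…,qx_d) for any q with qx ∈ ℤ^d. Then the primitive vector of N along the j-th coordinate ray is (1/n_j)·e_j; i.e., (1/n_j)e_j ∈ N and (t)e_j ∈ N with t > 0 implies t ≥ 1/n_j. -/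
/-- For `x ∈ ℚ^d ∩ (0,1]^d` and the lattice `N = ℤ^d + ℤx`, the primitive vector of
`N` along the `j`-th coordinate ray is `(1/n_j)·e_j`, where
`n_j = gcd(q,qx₁,…,q̂xⱼ,…,qx_d)/gcd(q,qx₁,…,qx_d)`. -/
theorem primitive_vector_along_ray (d : ℕ) (x : Fin d → ℚ)
    (hx : ∀ i, 0 < x i ∧ x i ≤ 1)
    (N : Set (Fin d → ℝ))
    (hN : N = {v : Fin d → ℝ | ∃ a : Fin d → ℤ, ∃ n : ℤ,
      v = fun i => (a i : ℝ) + n * (x i : ℝ)})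
    (q : ℤ) (hq : 0 < q) (m : Fin d → ℤ) (hm : ∀ i, (q : ℚ) * x i = m i)
    (j : Fin d)
    (nj : ℕ)
    (hnj : nj = Int.gcd q (Finset.gcd (Finset.univ.erase j) m) /
      Int.gcd q (Finset.gcd Finset.univ m)) :
    (fun i => if i = j then (1 / (nj : ℝ)) else 0) ∈ N ∧
    (∀ t : ℝ, 0 < t → (fun i => if i = j then t else 0) ∈ N → 1 / (nj : ℝ) ≤ t) := by
  subst hN
  set M : ℤ := Finset.gcd (Finset.univ.erase j) m with hM
  set G : ℕ := Int.gcd q M with hG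
  set g : ℕ := Int.gcd q (Finset.gcd Finset.univ m) with hg
  have hq0 : q ≠ 0 := hq.ne'
  have hGpos : 0 < G := Int.gcd_pos_iff.mpr (Or.inl hq0)
  have hgpos : 0 < g := Int.gcd_pos_iff.mpr (Or.inl hq0)
  have hGq : (G : ℤ) ∣ q := Int.gcd_dvd_left q M
  have hGM : (G : ℤ) ∣ M := Int.gcd_dvd_right q M
  set q' : ℤ := q / (G : ℤ) with hq'
  have hq'G : q' * G = q := Int.ediv_mul_cancel hGq
  have hGZ0 : (G : ℤ) ≠ 0 := by exact_mod_cast hGpos.ne'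
  have hq'pos : 0 < q' := by
    have h0 : 0 ≤ q' := Int.ediv_nonneg hq.le (by positivity : (0:ℤ) ≤ (G:ℤ))
    rcases h0.lt_or_eq with h | h
    · exact h
    · exfalso; apply hq0; rw [← hq'G, ← h]; ring
  -- gcd over univ decomposes
  have huniv : Finset.gcd Finset.univ m = gcd (m j) M := by
    rw [hM, ← Finset.gcd_insert, Finset.insert_erase (Finset.mem_univ j)]
  have hgnat : g = Nat.gcd q.natAbs (Nat.gcd (m j).natAbs M.natAbs) := by
    rw [hg, huniv]
    show Nat.gcd q.natAbs (gcd (m j) M).natAbs = _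
    rw [Int.natAbs_gcd]
    rfl
  have hqnatAbs : q.natAbs = q'.natAbs * G := by
    rw [← hq'G, Int.natAbs_mul, Int.natAbs_natCast]
  -- key gcd identity
  have hkey : Int.gcd q (q' * m j) = q'.natAbs * g := by
    show Nat.gcd q.natAbs (q' * m j).natAbs = _
    rw [Int.natAbs_mul, hqnatAbs, Nat.gcd_mul_left, hgnat]
    congr 1
    rw [hG]
    show Nat.gcd (Nat.gcd q.natAbs M.natAbs) (m j).natAbs = _
    rw [Nat.gcd_assoc, Nat.gcd_comm M.natAbs]
  have hgG : g ∣ G := by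
    have hdM : Finset.gcd Finset.univ m ∣ M :=
      Finset.dvd_gcd fun i _ => Finset.gcd_dvd (Finset.mem_univ i)
    have : (Finset.gcd Finset.univ m).natAbs ∣ M.natAbs := Int.natAbs_dvd_natAbs.mpr hdM
    exact Nat.dvd_gcd (Nat.gcd_dvd_left _ _) ((Nat.gcd_dvd_right _ _).trans this)
  have hGnj : G = nj * g := by rw [hnj]; exact (Nat.div_mul_cancel hgG).symm
  have hnjpos : 0 < nj := by
    rcases Nat.eq_zero_or_pos nj with h | h
    · exfalso; rw [h, zero_mul] at hGnj; exact hGpos.ne' hGnj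
    · exact h
  have hnjR : (nj : ℝ) ≠ 0 := by exact_mod_cast hnjpos.ne'
  have hgR : (g : ℝ) ≠ 0 := by exact_mod_cast hgpos.ne'
  have hGR : (G : ℝ) ≠ 0 := by exact_mod_cast hGpos.ne'
  have hq'R : (q' : ℝ) ≠ 0 := by exact_mod_cast hq'pos.ne'
  have hqR : (q : ℝ) ≠ 0 := by exact_mod_cast hq0
  have hq'GR : (q' : ℝ) * G = q := by exact_mod_cast hq'G
  have hGnjR : (G : ℝ) = nj * g := by exact_mod_cast hGnj
  have hinv : (1 : ℝ) / nj = g / G := by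
    rw [hGnjR]; field_simp
  have hxr : ∀ i, ((x i : ℚ) : ℝ) = (m i : ℝ) / q := by
    intro i
    have hq0' : (q : ℚ) ≠ 0 := Int.cast_ne_zero.mpr hq0
    have h : (x i : ℚ) = (m i : ℚ) / q := by
      rw [eq_div_iff hq0', mul_comm]; exact hm i
    rw [h]; push_cast; ring
  constructor
  · -- existence of the boundary lattice point
    set A := Int.gcdA q (q' * m j) with hA
    set B := Int.gcdB q (q' * m j) with hB
    have hbez : q * A + (q' * m j) * B = q' * g := by
      have h1 := Int.gcd_eq_gcd_ab q (q' * m j)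
      rw [hkey] at h1
      push_cast [Int.natAbs_of_nonneg hq'pos.le] at h1
      linear_combination -h1
    refine ⟨fun i => if i = j then A else -(B * (m i / (G : ℤ))), B * q', ?_⟩
    funext i
    by_cases hij : i = j
    · subst hij
      simp only [if_pos rfl, if_true]
      rw [hxr, hinv]
      have hbezR : (q : ℝ) * A + (q' * m i) * B = q' * g := by exact_mod_cast hbez
      rw [← hq'GR] at hbezR ⊢
      field_simp
      push_cast
      linear_combination (-1 : ℝ) * hbezR
    · simp only [if_neg hij]
      have hGmi : (G : ℤ) ∣ m i :=
        hGM.trans (Finset.gcd_dvd (Finset.mem_erase.mpr ⟨hij, Finset.mem_univ i⟩))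
      obtain ⟨c, hc⟩ := hGmi
      have hdiv : (m i / (G : ℤ)) = c := by rw [hc, Int.mul_ediv_cancel_left _ hGZ0]
      rw [hxr i, hdiv, hc]
      push_cast
      rw [← hq'GR]
      field_simp
      ring
  · -- minimality
    rintro t ht ⟨a, n, hv⟩
    have hvi : ∀ i, (if i = j then t else 0) = (a i : ℝ) + n * (x i : ℝ) :=
      fun i => congrFun hv i
    have hdvd : ∀ i ∈ Finset.univ.erase j, q ∣ n * m i := by
      intro i hi
      obtain ⟨hij, -⟩ := Finset.mem_erase.mp hi
      have h0 := hvi i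
      rw [if_neg hij, hxr i] at h0
      have h1 : ((q * a i + n * m i : ℤ) : ℝ) = 0 := by
        push_cast
        field_simp at h0
        linarith
      have h2 : q * a i + n * m i = 0 := by exact_mod_cast h1
      exact ⟨-(a i), by linear_combination h2⟩
    have hqnM : q ∣ n * M := by
      have h2 : q ∣ Finset.gcd (Finset.univ.erase j) (fun i => n * m i) :=
        Finset.dvd_gcd hdvd
      rw [Finset.gcd_mul_left, ← Int.abs_eq_normalize, ← hM] at h2
      rcases abs_cases n with ⟨h3, -⟩ | ⟨h3, -⟩
      · rwa [h3] at h2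
      · rw [h3, neg_mul] at h2
        exact dvd_neg.mp h2
    -- q' divides n
    set M' : ℤ := M / (G : ℤ) with hM'
    have hM'G : (G : ℤ) * M' = M := Int.mul_ediv_cancel' hGM
    have hcop : Int.gcd q' M' = 1 := by
      rw [hq', hM', hG]
      exact Int.gcd_div_gcd_div_gcd (by rw [← hG]; exact hGpos)
    have h4 : q' * (G : ℤ) ∣ (n * M') * (G : ℤ) := by
      rw [hq'G]
      have : (n * M') * (G : ℤ) = n * M := by rw [← hM'G]; ring
      rw [this]; exact hqnM
    have h5 : q' ∣ n * M' := (mul_dvd_mul_iff_right hGZ0).mp h4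
    have hq'n : q' ∣ n :=
      (Int.isCoprime_iff_gcd_eq_one.mpr hcop).dvd_of_dvd_mul_right h5
    obtain ⟨v, hvq⟩ := hq'n
    -- the j-th coordinate
    have hj := hvi j
    rw [if_pos rfl, hxr j] at hj
    have hqt : (q : ℝ) * t = ((q * a j + n * m j : ℤ) : ℝ) := by
      push_cast
      field_simp at hj
      linarith
    have hdk : ((q'.natAbs * g : ℕ) : ℤ) ∣ q * a j + n * m j := by
      have d1 : ((Int.gcd q (q' * m j) : ℕ) : ℤ) ∣ q := Int.gcd_dvd_left _ _
      have d2 : ((Int.gcd q (q' * m j) : ℕ) : ℤ) ∣ q' * m j := Int.gcd_dvd_right _ _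
      rw [hkey] at d1 d2
      have : q * a j + n * m j = q * a j + v * (q' * m j) := by rw [hvq]; ring
      rw [this]
      exact dvd_add (d1.mul_right _) (d2.mul_left _)
    obtain ⟨w, hw⟩ := hdk
    have hwR : (q : ℝ) * t = (q' : ℝ) * g * w := by
      rw [hqt, hw]
      push_cast
      rw [abs_of_pos (show (0:ℝ) < (q':ℝ) by exact_mod_cast hq'pos)]
    have hnt : (nj : ℝ) * t = w := by
      have hqq : (q : ℝ) = q' * (nj * g) := by rw [← hq'GR, hGnjR]
      rw [hqq] at hwR
      apply mul_left_cancel₀ (mul_ne_zero hq'R hgR)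
      calc (q' : ℝ) * g * ((nj : ℝ) * t) = (q' : ℝ) * ((nj : ℝ) * g) * t := by ring
        _ = (q' : ℝ) * g * w := hwR
    have hw1 : (1 : ℤ) ≤ w := by
      have hwpos : (0 : ℝ) < w := by rw [← hnt]; positivity
      have : (0 : ℤ) < w := by exact_mod_cast hwpos
      omega
    have htw : t = (w : ℝ) / nj := by
      rw [← hnt]; field_simp
    rw [htw]
    gcongr
    exact_mod_cast hw1
end

section
/- Let x ∈ ℚ^d ∩ (0,1]^d and N = ℤ^d + ℤ·x. Then inf{ Σᵢ₌₁^d vᵢ : v ∈ N, vᵢ > 0 for all i } = min_{n ≥ 0} Σᵢ₌₁^d (1 + n·xᵢ − ⌈n·xᵢ⌉), where the minimum is over integers n ≥ 0. -/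
/-- For `x ∈ ℚ^d ∩ (0,1]^d`, the infimum of the coordinate sum over points of the
lattice `ℤ^d + ℤx` in the open positive orthant is attained and equals
`min_{n ≥ 0} Σᵢ (1 + n·xᵢ - ⌈n·xᵢ⌉)`. -/
theorem mld_of_rational_point (d : ℕ) (hd : 0 < d) (x : Fin d → ℚ)
    (hx : ∀ i, 0 < x i ∧ x i ≤ 1) :
    ∃ r : ℝ,
      IsLeast {s : ℝ | ∃ a : Fin d → ℤ, ∃ n : ℤ,
          (∀ i, 0 < (a i : ℚ) + n * x i) ∧
          s = ((∑ i, ((a i : ℚ) + n * x i) : ℚ) : ℝ)} r ∧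
      IsLeast {s : ℝ | ∃ n : ℕ,
          s = ∑ i, (1 + (n : ℝ) * (x i : ℝ) - ((⌈(n : ℚ) * x i⌉ : ℤ) : ℝ))} r := by
  classical
  set g : ℤ → ℚ := fun n => ∑ i, (1 + (n : ℚ) * x i - ⌈(n : ℚ) * x i⌉) with hg
  set M : ℕ := ∏ i : Fin d, (x i).den with hM
  have hMpos : 0 < M := Finset.prod_pos (fun i _ => (x i).pos)
  have hm : ∀ i, ∃ m : ℤ, (m : ℚ) = (M : ℚ) * x i := by
    intro i
    obtain ⟨k, hk⟩ := Finset.dvd_prod_of_mem (fun i => (x i).den) (Finset.mem_univ i)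
    refine ⟨(k : ℤ) * (x i).num, ?_⟩
    have hden : ((x i).den : ℚ) * x i = (x i).num := by
      rw [mul_comm, Rat.mul_den_eq_num]
    have hMk : (M : ℚ) = ((x i).den : ℚ) * (k : ℚ) := by rw [hM, hk]; push_cast; ring
    push_cast
    rw [hMk]
    linear_combination -(k : ℚ) * hden
  -- positivity of each summand
  have tpos : ∀ (n : ℤ) i, 0 < 1 + (n : ℚ) * x i - ⌈(n : ℚ) * x i⌉ := by
    intro n i
    have := Int.ceil_lt_add_one ((n : ℚ) * x i)
    linarith
  -- periodicity: g n = g (n % M)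
  have key : ∀ (n : ℤ) i, (1 + (n : ℚ) * x i - ⌈(n : ℚ) * x i⌉)
      = (1 + ((n % (M : ℤ) : ℤ) : ℚ) * x i - ⌈((n % (M : ℤ) : ℤ) : ℚ) * x i⌉) := by
    intro n i
    obtain ⟨m, hmi⟩ := hm i
    have h1 : (n : ℚ) = ((n % (M : ℤ) : ℤ) : ℚ) + (M : ℚ) * ((n / (M : ℤ) : ℤ) : ℚ) := by
      exact_mod_cast (Int.emod_add_mul_ediv n (M : ℤ)).symm
    have hsplit : (n : ℚ) * x i
        = ((n % (M : ℤ) : ℤ) : ℚ) * x i + ((n / (M : ℤ)) * m : ℤ) := by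
      push_cast
      linear_combination x i * h1 - ((n / (M : ℤ) : ℤ) : ℚ) * hmi
    rw [hsplit, Int.ceil_add_intCast]
    push_cast
    ring
  have gper : ∀ n : ℤ, g n = g (n % (M : ℤ)) := fun n =>
    Finset.sum_congr rfl (fun i _ => key n i)
  -- the finite set of values
  set F : Finset ℚ := (Finset.range M).image (fun n : ℕ => g n) with hF
  have hFne : F.Nonempty := ⟨g 0, Finset.mem_image.2 ⟨0, Finset.mem_range.2 hMpos, rfl⟩⟩
  set r0 : ℚ := F.min' hFne with hr0
  obtain ⟨n0, hn0M, hn0⟩ : ∃ n0 ∈ Finset.range M, g n0 = r0 := by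
    obtain ⟨q, hq1, hq2⟩ := Finset.mem_image.1 (F.min'_mem hFne)
    exact ⟨q, hq1, hq2⟩
  have glb : ∀ n : ℤ, r0 ≤ g n := by
    intro n
    have hnn : 0 ≤ n % (M : ℤ) := Int.emod_nonneg n (by exact_mod_cast hMpos.ne')
    have h1 : g n = g (((n % (M : ℤ)).toNat : ℕ) : ℤ) := by
      rw [gper n, Int.toNat_of_nonneg hnn]
    have h2 : (n % (M : ℤ)).toNat < M := by
      have := Int.emod_lt_of_pos n (b := (M : ℤ)) (by exact_mod_cast hMpos)
      omega
    rw [h1]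
    exact F.min'_le _ (Finset.mem_image.2 ⟨_, Finset.mem_range.2 h2, rfl⟩)
  refine ⟨(r0 : ℝ), ⟨⟨fun i => 1 - ⌈((n0 : ℤ) : ℚ) * x i⌉, (n0 : ℤ), ?_, ?_⟩, ?_⟩,
    ⟨⟨n0, ?_⟩, ?_⟩⟩
  · intro i
    have h := tpos (n0 : ℤ) i
    push_cast at h ⊢
    linarith
  · have heq : (∑ i, (((1 - ⌈((n0 : ℤ) : ℚ) * x i⌉ : ℤ) : ℚ) + ((n0 : ℤ) : ℚ) * x i)) = r0 := by
      rw [← hn0]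
      simp only [hg]
      refine Finset.sum_congr rfl fun i _ => ?_
      push_cast
      ring
    exact_mod_cast heq.symm
  · rintro s ⟨a, n, hpos, rfl⟩
    have hai : ∀ i, (1 : ℚ) - ⌈(n : ℚ) * x i⌉ ≤ a i := by
      intro i
      have h := hpos i
      have h2 : (0 : ℚ) < ((a i + ⌈(n : ℚ) * x i⌉ : ℤ) : ℚ) := by
        push_cast
        have := Int.le_ceil ((n : ℚ) * x i)
        linarith
      have h3 : (1 : ℤ) ≤ a i + ⌈(n : ℚ) * x i⌉ := by exact_mod_cast h2
      have h4 : (1 : ℤ) - ⌈(n : ℚ) * x i⌉ ≤ a i := by omega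
      exact_mod_cast h4
    have hge : r0 ≤ ∑ i, ((a i : ℚ) + n * x i) := by
      refine (glb n).trans ?_
      rw [hg]
      refine Finset.sum_le_sum fun i _ => ?_
      have := hai i
      linarith
    exact_mod_cast hge
  · rw [← hn0]
    simp only [hg]
    push_cast
    rfl
  · rintro s ⟨n, rfl⟩
    have : ((g (n : ℤ) : ℚ) : ℝ)
        = ∑ i, (1 + (n : ℝ) * (x i : ℝ) - ((⌈(n : ℚ) * x i⌉ : ℤ) : ℝ)) := by
      simp only [hg]
      push_cast
      rfl
    rw [← this]
    exact_mod_cast glb (n : ℤ)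
end

section
/- There is no sequence of lattices N¹, N², N³, … in ℝ^d, each containing ℤ^d, such that the associated values aⁿ = min{ Σᵢ xᵢ : x ∈ Nⁿ, all xᵢ > 0 } form a strictly increasing sequence a¹ < a² < a³ < ⋯. (ACC for toric minimal log discrepancies with zero boundary.) -/
noncomputable def cfr (t : ℝ) : ℝ := t - ⌈t⌉ + 1

lemma cfr_pos (t : ℝ) : 0 < cfr t := by
  have := Int.ceil_lt_add_one t
  unfold cfr; linarith

lemma cfr_le_self {t : ℝ} (h : 0 < t) : cfr t ≤ t := by
  have : (0:ℤ) < ⌈t⌉ := Int.ceil_pos.mpr h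
  have : (1:ℝ) ≤ ⌈t⌉ := by exact_mod_cast this
  unfold cfr; linarith

lemma cfr_int_add (t : ℝ) (z : ℤ) : cfr (t + z) = cfr t := by
  unfold cfr; rw [Int.ceil_add_intCast]; push_cast; ring

lemma cfr_eq_self {t : ℝ} (h1 : 0 < t) (h2 : t ≤ 1) : cfr t = t := by
  have : ⌈t⌉ = 1 := by
    rw [Int.ceil_eq_iff]
    constructor <;> push_cast <;> linarith
  unfold cfr; rw [this]; push_cast; ring

/-- simultaneous qualitative Dirichlet via pigeonhole -/
lemma pigeon {ι : Type*} [Fintype ι] (α : ι → ℝ) {τ : ℝ} (hτ : 0 < τ) :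
    ∃ m : ℕ, 1 ≤ m ∧ ∀ i, ∃ l : ℤ, |(m : ℝ) * α i - l| < τ := by
  classical
  set B : ℤ := ⌈1/τ⌉ with hB
  have hBpos : 0 < B := Int.ceil_pos.mpr (by positivity)
  set f : ℕ → (ι → ℤ) := fun n i => ⌊Int.fract ((n:ℝ) * α i) / τ⌋ with hf
  have hmaps : ∀ n : ℕ, n ∈ Finset.range (B.toNat ^ Fintype.card ι + 1) →
      f n ∈ Fintype.piFinset (fun _ : ι => Finset.Ico (0:ℤ) B) := by
    intro n _
    rw [Fintype.mem_piFinset]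
    intro i
    rw [Finset.mem_Ico]
    have h0 : (0:ℝ) ≤ Int.fract ((n:ℝ) * α i) := Int.fract_nonneg _
    have h1 : Int.fract ((n:ℝ) * α i) < 1 := Int.fract_lt_one _
    constructor
    · exact Int.floor_nonneg.mpr (by positivity)
    · have h2 : (⌊Int.fract ((n:ℝ) * α i) / τ⌋ : ℝ) < (B:ℝ) := by
        calc (⌊Int.fract ((n:ℝ) * α i) / τ⌋ : ℝ) ≤ Int.fract ((n:ℝ) * α i) / τ :=
              Int.floor_le _
          _ < 1 / τ := by gcongr
          _ ≤ (B:ℝ) := Int.le_ceil _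
      exact_mod_cast h2
  have hcard : (Fintype.piFinset (fun _ : ι => Finset.Ico (0:ℤ) B)).card
      < (Finset.range (B.toNat ^ Fintype.card ι + 1)).card := by
    rw [Fintype.card_piFinset, Finset.card_range]
    have hc : ∀ _i : ι, (Finset.Ico (0:ℤ) B).card = B.toNat := fun _ => by
      simp [Int.card_Ico]
    rw [Finset.prod_congr rfl (fun i _ => hc i), Finset.prod_const, Finset.card_univ]
    exact Nat.lt_succ_self _
  obtain ⟨n1, hn1, n2, hn2, hne, heq⟩ :=
    Finset.exists_ne_map_eq_of_card_lt_of_maps_to hcard hmaps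
  have key : ∀ p q : ℕ, p < q → f p = f q →
      ∃ m : ℕ, 1 ≤ m ∧ ∀ i, ∃ l : ℤ, |(m : ℝ) * α i - l| < τ := by
    intro p q hpq hfeq
    refine ⟨q - p, by omega, fun i => ?_⟩
    refine ⟨⌊(q:ℝ) * α i⌋ - ⌊(p:ℝ) * α i⌋, ?_⟩
    have hfl : ⌊Int.fract ((p:ℝ) * α i) / τ⌋ = ⌊Int.fract ((q:ℝ) * α i) / τ⌋ :=
      congrFun hfeq i
    have habs : |Int.fract ((p:ℝ) * α i) / τ - Int.fract ((q:ℝ) * α i) / τ| < 1 :=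
      Int.abs_sub_lt_one_of_floor_eq_floor hfl
    have hdiff : Int.fract ((p:ℝ) * α i) / τ - Int.fract ((q:ℝ) * α i) / τ
        = (Int.fract ((p:ℝ) * α i) - Int.fract ((q:ℝ) * α i)) / τ := by ring
    rw [hdiff, abs_div, abs_of_pos hτ, div_lt_one hτ] at habs
    have hcast : ((q - p : ℕ) : ℝ) = (q:ℝ) - (p:ℝ) := by
      exact_mod_cast Nat.cast_sub (R := ℝ) hpq.le
    have hexp : ((q - p : ℕ) : ℝ) * α i - ((⌊(q:ℝ) * α i⌋ - ⌊(p:ℝ) * α i⌋ : ℤ) : ℝ)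
        = Int.fract ((q:ℝ) * α i) - Int.fract ((p:ℝ) * α i) := by
      rw [hcast]
      unfold Int.fract
      push_cast
      ring
    rw [hexp]
    rw [abs_sub_comm] at habs
    exact habs
  rcases hne.lt_or_gt with hlt | hlt
  · exact key n1 n2 hlt heq
  · exact key n2 n1 hlt heq.symm

lemma cfr_le_one (t : ℝ) : cfr t ≤ 1 := by
  have := Int.le_ceil t
  unfold cfr; linarith

lemma keylemma {ι : Type*} [Fintype ι] (θ : ι → ℝ) {ρ : ℝ} (hρ : 0 < ρ) (hρ4 : ρ ≤ 1/4) :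
    ∃ (m : ℕ) (l : ι → ℤ), 1 ≤ m ∧ (∀ i, |(m:ℝ) * θ i - l i| < ρ) ∧
      ∑ i, ((m:ℝ) * θ i - l i) ≤ 0 := by
  classical
  obtain ⟨m₁, hm₁, hl₁⟩ := pigeon θ (half_pos hρ)
  choose l₁ hl₁' using hl₁
  set ε : ι → ℝ := fun i => (m₁:ℝ) * θ i - l₁ i with hε
  by_cases hs : ∑ i, ε i ≤ 0
  · exact ⟨m₁, l₁, hm₁, fun i => lt_of_lt_of_le (hl₁' i) (by linarith), hs⟩
  push_neg at hs
  obtain ⟨i₀, -, hi₀⟩ : ∃ i ∈ Finset.univ, 0 < ε i := by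
    by_contra hcon
    push_neg at hcon
    exact absurd (Finset.sum_nonpos (fun i hi => hcon i hi)) (not_le.mpr hs)
  set r : ℕ := Fintype.card ι with hrdef
  have hr : 1 ≤ r := Fintype.card_pos_iff.mpr ⟨i₀⟩
  set s := ∑ i, ε i with hsdef
  set τ : ℝ := min (ρ/2) (min (s/(r+1)) (ε i₀ / 2)) with hτdef
  have hτpos : 0 < τ := lt_min (half_pos hρ) (lt_min (by positivity) (half_pos hi₀))
  have hτρ : τ ≤ ρ/2 := min_le_left _ _
  have hτs : τ ≤ s/(r+1) := le_trans (min_le_right _ _) (min_le_left _ _)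
  have hτε : τ ≤ ε i₀ / 2 := le_trans (min_le_right _ _) (min_le_right _ _)
  obtain ⟨j, hj1, hjl⟩ := pigeon ε hτpos
  choose p hp using hjl
  have hei0 : ε i₀ < ρ/2 := lt_of_le_of_lt (le_abs_self _) (by simpa [hε] using hl₁' i₀)
  have hj2 : 2 ≤ j := by
    rcases Nat.lt_or_ge j 2 with h | h
    · exfalso
      interval_cases j
      have h1 := hp i₀
      simp only [Nat.cast_one, one_mul] at h1
      have h2 : |ε i₀ - (p i₀ : ℝ)| < ε i₀ / 2 := lt_of_lt_of_le h1 hτε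
      rw [abs_lt] at h2
      have hp0 : (0:ℝ) < (p i₀ : ℝ) := by linarith
      have hp1 : ((p i₀ : ℤ) : ℝ) < 1 := by linarith
      have hge : (1:ℤ) ≤ p i₀ := by exact_mod_cast hp0
      have : (1:ℝ) ≤ ((p i₀ : ℤ):ℝ) := by exact_mod_cast hge
      linarith
    · exact h
  have hjm : 1 ≤ (j-1) * m₁ := by
    calc 1 = 1*1 := rfl
    _ ≤ (j-1)*m₁ := Nat.mul_le_mul (by omega) hm₁
  have hpt : ∀ i, (((j-1) * m₁ : ℕ):ℝ) * θ i - ((p i + ((j:ℤ)-1) * l₁ i : ℤ):ℝ)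
      = ((j:ℝ) * ε i - p i) - ε i := by
    intro i
    have hj1' : (1:ℕ) ≤ j := hj1
    have hcast : (((j-1) * m₁ : ℕ):ℝ) = ((j:ℝ) - 1) * (m₁:ℝ) := by
      push_cast [Nat.cast_sub hj1']
      ring
    rw [hcast]
    simp only [hε]
    push_cast
    ring
  have hbound : ∀ i, |((j:ℝ) * ε i - p i) - ε i| < ρ := by
    intro i
    calc |((j:ℝ) * ε i - p i) - ε i| ≤ |(j:ℝ) * ε i - p i| + |ε i| := abs_sub _ _
    _ < τ + ρ/2 := add_lt_add (hp i) (by simpa [hε] using hl₁' i)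
    _ ≤ ρ := by linarith
  have hsum : ∑ i, (((j:ℝ) * ε i - p i) - ε i) ≤ 0 := by
    have h1 : ∑ i, (((j:ℝ) * ε i - p i) - ε i) = (∑ i, ((j:ℝ) * ε i - p i)) - s := by
      rw [hsdef, ← Finset.sum_sub_distrib]
    have h2 : ∑ i, ((j:ℝ) * ε i - p i) ≤ ∑ i, |(j:ℝ) * ε i - p i| :=
      Finset.sum_le_sum (fun i _ => le_abs_self _)
    have h3 : ∑ i, |(j:ℝ) * ε i - p i| < ∑ _i : ι, τ :=
      Finset.sum_lt_sum_of_nonempty ⟨i₀, Finset.mem_univ i₀⟩ (fun i _ => hp i)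
    have h4 : ∑ _i : ι, τ = (r:ℝ) * τ := by
      rw [Finset.sum_const, Finset.card_univ, nsmul_eq_mul, hrdef]
    have h5 : (r:ℝ) * τ ≤ (r:ℝ) * (s/(r+1)) :=
      mul_le_mul_of_nonneg_left hτs (by positivity)
    have h6 : (r:ℝ) * (s/(r+1)) < s := by
      rw [mul_div_assoc'] at *
      rw [div_lt_iff₀ (by positivity)]
      nlinarith
    linarith
  refine ⟨(j-1) * m₁, fun i => p i + ((j:ℤ)-1) * l₁ i, hjm, ?_, ?_⟩
  · intro i
    rw [hpt i]
    exact hbound i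
  · calc ∑ i, ((((j-1) * m₁:ℕ):ℝ) * θ i - ((p i + ((j:ℤ)-1) * l₁ i : ℤ):ℝ))
        = ∑ i, (((j:ℝ) * ε i - p i) - ε i) := Finset.sum_congr rfl (fun i _ => hpt i)
    _ ≤ 0 := hsum


/-- ACC for toric minimal log discrepancies with zero boundary: there is no sequence
of lattices `Nⁿ ⊇ ℤ^d` whose minima `aⁿ = min{Σxᵢ : x ∈ Nⁿ, all xᵢ > 0}` form a
strictly increasing sequence. -/
theorem toric_mld_acc (d : ℕ)
    (N : ℕ → AddSubgroup (Fin d → ℝ))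
    (hZ : ∀ n, ∀ m : Fin d → ℤ, (fun i => (m i : ℝ)) ∈ N n)
    (a : ℕ → ℝ)
    (ha : ∀ n, IsLeast
      {s : ℝ | ∃ x ∈ N n, (∀ i, 0 < x i) ∧ s = ∑ i, x i} (a n)) :
    ¬ StrictMono a := by
  classical
  intro hs
  -- upper bound by d
  have hub : ∀ n, a n ≤ d := by
    intro n
    refine (ha n).2 ⟨(fun i => ((1 : ℤ) : ℝ)), hZ n (fun _ => 1),
      fun i => by norm_num, by simp⟩
  have bdd : BddAbove (Set.range a) := ⟨(d:ℝ), by rintro y ⟨n, rfl⟩; exact hub n⟩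
  set A := ⨆ n, a n with hA
  have htend : Filter.Tendsto a Filter.atTop (nhds A) :=
    tendsto_atTop_ciSup hs.monotone bdd
  have hlt : ∀ n, a n < A :=
    fun n => lt_of_lt_of_le (hs (Nat.lt_succ_self n)) (le_ciSup bdd (n+1))
  -- minimizers, normalized to (0,1]^d
  have hmin : ∀ n, ∃ x, x ∈ N n ∧ (∀ i, 0 < x i) ∧ a n = ∑ i, x i := fun n => (ha n).1
  choose xt hmem hpos hsum using hmin
  set X : ℕ → Fin d → ℝ := fun n i => cfr (xt n i) with hX
  have hXmem : ∀ n, X n ∈ N n := by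
    intro n
    have h2 := (N n).add_mem (hmem n) (hZ n (fun i => 1 - ⌈xt n i⌉))
    convert h2 using 1
    funext i
    show cfr (xt n i) = xt n i + ((1 - ⌈xt n i⌉ : ℤ) : ℝ)
    unfold cfr; push_cast; ring
  have hXpos : ∀ n i, 0 < X n i := fun n i => cfr_pos _
  have hXle : ∀ n i, X n i ≤ 1 := fun n i => cfr_le_one _
  have hXsum : ∀ n, ∑ i, X n i = a n := by
    intro n
    apply le_antisymm
    · rw [hsum n]
      exact Finset.sum_le_sum (fun i _ => cfr_le_self (hpos n i))
    · exact (ha n).2 ⟨X n, hXmem n, fun i => hXpos n i, rfl⟩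
  -- convergent subsequence
  have hXmemIcc : ∀ n, X n ∈ Set.Icc (0 : Fin d → ℝ) 1 :=
    fun n => ⟨fun i => (hXpos n i).le, fun i => hXle n i⟩
  obtain ⟨x, hxIcc, φ, hφmono, hconv⟩ := isCompact_Icc.tendsto_subseq hXmemIcc
  have hx0 : ∀ i, 0 ≤ x i := fun i => hxIcc.1 i
  have hx1 : ∀ i, x i ≤ 1 := fun i => hxIcc.2 i
  have hsx : ∑ i, x i = A := by
    have h1 : Filter.Tendsto (fun j => ∑ i, X (φ j) i) Filter.atTop (nhds (∑ i, x i)) :=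
      tendsto_finset_sum _ (fun i _ => tendsto_pi_nhds.mp hconv i)
    have h2 : (fun j => ∑ i, X (φ j) i) = fun j => a (φ j) := funext fun j => hXsum (φ j)
    have h3 : Filter.Tendsto (fun j => a (φ j)) Filter.atTop (nhds A) :=
      htend.comp hφmono.tendsto_atTop
    rw [h2] at h1
    exact tendsto_nhds_unique h1 h3
  -- common denominator for the rational coordinates
  set D : Fin d → ℕ := fun i =>
    if h : ∃ q : ℚ, (q:ℝ) = x i then h.choose.den else 1 with hD
  have hDpos : ∀ i, 0 < D i := by
    intro i
    by_cases h : ∃ q : ℚ, (q:ℝ) = x i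
    · simp only [hD, dif_pos h]; exact h.choose.den_pos
    · simp only [hD, dif_neg h]; norm_num
  set Q : ℕ := ∏ i, D i with hQ
  have hQ1 : 1 ≤ Q := by
    rw [hQ]
    exact Nat.one_le_iff_ne_zero.mpr (Nat.pos_iff_ne_zero.mp
      (Finset.prod_pos (fun i _ => hDpos i)))
  have hQz : ∀ i, ¬ Irrational (x i) → ∃ z : ℤ, (Q:ℝ) * x i = z := by
    intro i hi
    have h : ∃ q : ℚ, (q:ℝ) = x i := by
      rw [Irrational, not_not] at hi
      obtain ⟨q, hq⟩ := hi
      exact ⟨q, hq⟩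
    obtain ⟨c, hc⟩ : D i ∣ Q := Finset.dvd_prod_of_mem D (Finset.mem_univ i)
    have hDi : D i = h.choose.den := by simp only [hD, dif_pos h]
    set q : ℚ := h.choose with hqdef
    have hq : (q:ℝ) = x i := h.choose_spec
    refine ⟨(c:ℤ) * q.num, ?_⟩
    have keyq : ((q.den:ℝ)) * (q:ℝ) = (q.num:ℝ) := by
      have := Rat.den_mul_eq_num q
      exact_mod_cast congrArg (fun r : ℚ => (r:ℝ)) this
    rw [hc, hDi, ← hq]
    push_cast
    first
      | rfl
      | (rw [show ((q.den:ℝ) * (c:ℝ)) * (q:ℝ) = (c:ℝ) * ((q.den:ℝ) * (q:ℝ)) by ring, keyq])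
      | linear_combination (c:ℝ) * keyq
  -- the gap to the nearest integer for irrational coordinates
  set T : Finset ℝ := insert (1/4)
    ((Finset.univ.filter (fun i => Irrational (x i))).image
      (fun i => min (x i) (1 - x i))) with hT
  have hTne : T.Nonempty := Finset.insert_nonempty _ _
  set ρ : ℝ := T.min' hTne with hρdef
  have hρ4 : ρ ≤ 1/4 := Finset.min'_le _ _ (Finset.mem_insert_self _ _)
  have hxint : ∀ i, Irrational (x i) → 0 < x i ∧ x i < 1 := by
    intro i hi
    have h0 : x i ≠ 0 := by
      have := hi.ne_int 0
      simpa using this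
    have h1 : x i ≠ 1 := by
      have := hi.ne_int 1
      simpa using this
    exact ⟨lt_of_le_of_ne (hx0 i) (Ne.symm h0), lt_of_le_of_ne (hx1 i) h1⟩
  have hρpos : 0 < ρ := by
    rw [hρdef]
    rw [Finset.lt_min'_iff]
    intro yv hyv
    rw [hT, Finset.mem_insert] at hyv
    rcases hyv with h | h
    · rw [h]; norm_num
    · rw [Finset.mem_image] at h
      obtain ⟨i, hi, hval⟩ := h
      rw [Finset.mem_filter] at hi
      obtain ⟨h0, h1⟩ := hxint i hi.2
      rw [← hval]
      exact lt_min h0 (by linarith)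
  have hρle : ∀ i, Irrational (x i) → ρ ≤ min (x i) (1 - x i) := by
    intro i hi
    exact Finset.min'_le _ _ (Finset.mem_insert_of_mem
      (Finset.mem_image_of_mem _ (Finset.mem_filter.mpr ⟨Finset.mem_univ i, hi⟩)))
  -- apply the key lemma
  set θ : Fin d → ℝ := fun i => if Irrational (x i) then (Q:ℝ) * x i else 0 with hθ
  obtain ⟨m, l, hm1, hlb, hsumle⟩ := keylemma θ hρpos hρ4
  set ε : Fin d → ℝ := fun i => (m:ℝ) * θ i - l i with hεdef
  have hεle : ∀ i, |ε i| < ρ := fun i => hlb i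
  have hsumε : ∑ i, ε i ≤ 0 := hsumle
  have hε0 : ∀ i, ¬ Irrational (x i) → ε i = 0 := by
    intro i hi
    have hθ0 : θ i = 0 := by simp only [hθ, if_neg hi]
    have h1 : |(0:ℝ) - l i| < ρ := by
      have := hlb i
      rwa [hθ0, mul_zero] at this
    have h2 : |(l i : ℝ)| < 1 := by
      rw [zero_sub, abs_neg] at h1
      linarith
    have h3 : l i = 0 := Int.abs_lt_one_iff.mp (by exact_mod_cast h2)
    simp only [hεdef, hθ0, mul_zero, h3, Int.cast_zero, zero_sub, neg_zero]
  -- the multiplier k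
  set k : ℕ := 1 + m * Q with hk
  have hk2 : 2 ≤ k := by
    have : 1 ≤ m * Q := by
      calc 1 = 1 * 1 := rfl
        _ ≤ m * Q := Nat.mul_le_mul hm1 hQ1
    omega
  have hkR : (2:ℝ) ≤ (k:ℝ) := by exact_mod_cast hk2
  have hkpos : (0:ℝ) < (k:ℝ) := by linarith
  -- the shifted limit point w
  set w : Fin d → ℝ := fun i => x i + ε i with hw
  have hrep : ∀ i, ∃ z : ℤ, (k:ℝ) * x i = w i + z := by
    intro i
    by_cases hi : Irrational (x i)
    · refine ⟨l i, ?_⟩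
      have hθi : θ i = (Q:ℝ) * x i := by simp only [hθ, if_pos hi]
      have hkcast : ((k:ℕ):ℝ) = 1 + (m:ℝ) * (Q:ℝ) := by rw [hk]; push_cast; ring
      simp only [hw, hεdef, hθi]
      rw [hkcast]
      ring
    · obtain ⟨z0, hz0⟩ := hQz i hi
      refine ⟨(m:ℤ) * z0, ?_⟩
      have hεi : ε i = 0 := hε0 i hi
      have hkcast : ((k:ℕ):ℝ) = 1 + (m:ℝ) * (Q:ℝ) := by rw [hk]; push_cast; ring
      simp only [hw, hεi, add_zero]
      rw [hkcast]
      push_cast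
      rw [show (1 + (m:ℝ) * (Q:ℝ)) * x i = x i + (m:ℝ) * ((Q:ℝ) * x i) by ring, hz0]
  have hwcases : ∀ i, (x i = 0 ∧ w i = 0) ∨ (x i = 1 ∧ w i = 1) ∨ (0 < w i ∧ w i < 1) := by
    intro i
    by_cases hi : Irrational (x i)
    · right; right
      have h1 : ρ ≤ min (x i) (1 - x i) := hρle i hi
      have h2 := abs_lt.mp (hεle i)
      have h3 : ρ ≤ x i := le_trans h1 (min_le_left _ _)
      have h4 : ρ ≤ 1 - x i := le_trans h1 (min_le_right _ _)
      constructor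
      · simp only [hw]; linarith [h2.1]
      · simp only [hw]; linarith [h2.2]
    · have hεi : ε i = 0 := hε0 i hi
      have hwi : w i = x i := by simp only [hw, hεi, add_zero]
      rcases eq_or_lt_of_le (hx0 i) with h0 | h0
      · left; exact ⟨h0.symm, by rw [hwi, ← h0]⟩
      rcases eq_or_lt_of_le (hx1 i) with h1 | h1
      · right; left; exact ⟨h1, by rw [hwi, h1]⟩
      · right; right; rw [hwi]; exact ⟨h0, h1⟩
  have hsumw : ∑ i, w i ≤ A := by
    have : ∑ i, w i = (∑ i, x i) + ∑ i, ε i := by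
      rw [hw, Finset.sum_add_distrib]
    rw [this, hsx]
    linarith
  -- margins
  set M : Fin d → ℝ := fun i => if 0 < w i ∧ w i < 1 then min (w i) (1 - w i) else 1
    with hM
  have hMpos : ∀ i, 0 < M i := by
    intro i
    by_cases h : 0 < w i ∧ w i < 1
    · simp only [hM, if_pos h]
      exact lt_min h.1 (by linarith [h.2])
    · simp only [hM, if_neg h]; norm_num
  -- choose a far enough index
  have hev : ∀ i : Fin d, ∀ᶠ j in Filter.atTop, |X (φ j) i - x i| < M i / k := by
    intro i
    have hc := tendsto_pi_nhds.mp hconv i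
    have := Metric.tendsto_nhds.mp hc (M i / k) (div_pos (hMpos i) hkpos)
    simpa [Real.dist_eq] using this
  obtain ⟨j, hj⟩ := (Filter.eventually_all.mpr hev).exists
  set n := φ j with hn
  set b := a n with hb
  have hbA : b < A := hlt n
  have hδsum : ∑ i, (X n i - x i) = b - A := by
    rw [Finset.sum_sub_distrib, hXsum n, hsx]
  -- the contradiction point
  set y : Fin d → ℝ := fun i => cfr ((k:ℝ) * X n i) with hy
  have hymem : y ∈ N n := by
    have h1 : k • X n ∈ N n := nsmul_mem (hXmem n) k
    have h2 := (N n).add_mem h1 (hZ n (fun i => 1 - ⌈(k:ℝ) * X n i⌉))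
    convert h2 using 1
    funext i
    show cfr ((k:ℝ) * X n i) = (k • X n) i + ((1 - ⌈(k:ℝ) * X n i⌉ : ℤ) : ℝ)
    rw [Pi.smul_apply, nsmul_eq_mul]
    unfold cfr
    push_cast
    ring
  have hypos : ∀ i, 0 < y i := fun i => cfr_pos _
  have hyb : ∀ i, y i ≤ w i + (k:ℝ) * (X n i - x i) := by
    intro i
    obtain ⟨z, hz⟩ := hrep i
    have hsplit : (k:ℝ) * X n i = (w i + (k:ℝ) * (X n i - x i)) + z := by
      rw [mul_sub]; linarith [hz]
    have hyi : y i = cfr (w i + (k:ℝ) * (X n i - x i)) := by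
      rw [hy]
      show cfr ((k:ℝ) * X n i) = _
      rw [hsplit, cfr_int_add]
    have hδM : |X n i - x i| < M i / k := hj i
    have hhM : |(k:ℝ) * (X n i - x i)| < M i := by
      rw [abs_mul, abs_of_pos hkpos]
      calc (k:ℝ) * |X n i - x i| < (k:ℝ) * (M i / k) := by gcongr
        _ = M i := by field_simp
    rcases hwcases i with ⟨hxz, hwz⟩ | ⟨hxo, hwo⟩ | ⟨hw0, hw1⟩
    · rw [hyi, hwz, zero_add]
      apply cfr_le_self
      have : 0 < X n i - x i := by rw [hxz, sub_zero]; exact hXpos n i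
      positivity
    · rw [hyi, hwo]
      apply cfr_le_self
      have hM1 : M i = 1 := by
        simp only [hM]
        rw [if_neg]
        rintro ⟨hc1, hc2⟩
        rw [hwo] at hc2
        linarith
      rw [hM1] at hhM
      have := abs_lt.mp hhM
      linarith [this.1]
    · have hcond : 0 < w i ∧ w i < 1 := ⟨hw0, hw1⟩
      have hMi : M i = min (w i) (1 - w i) := by simp only [hM, if_pos hcond]
      rw [hMi] at hhM
      have h2 := abs_lt.mp hhM
      have h3 : min (w i) (1 - w i) ≤ w i := min_le_left _ _
      have h4 : min (w i) (1 - w i) ≤ 1 - w i := min_le_right _ _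
      rw [hyi, cfr_eq_self (by linarith [h2.1]) (by linarith [h2.2])]
  -- conclude
  have hles : a n ≤ ∑ i, y i := (ha n).2
    (show (∑ i, y i) ∈ {s : ℝ | ∃ x ∈ N n, (∀ i, 0 < x i) ∧ s = ∑ i, x i}
      from ⟨y, hymem, hypos, rfl⟩)
  have h2 : ∑ i, y i ≤ ∑ i, (w i + (k:ℝ) * (X n i - x i)) :=
    Finset.sum_le_sum (fun i _ => hyb i)
  have h3 : ∑ i, (w i + (k:ℝ) * (X n i - x i))
      = (∑ i, w i) + (k:ℝ) * (b - A) := by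
    rw [Finset.sum_add_distrib, ← Finset.mul_sum, hδsum]
  have h5 : (∑ i, w i) + (k:ℝ) * (b - A) < b := by
    have hmul : 1 * (A - b) < (k:ℝ) * (A - b) :=
      mul_lt_mul_of_pos_right (by linarith) (by linarith)
    linarith
  rw [h3] at h2
  have : a n < a n := by
    calc a n ≤ ∑ i, y i := hles
      _ ≤ (∑ i, w i) + (k:ℝ) * (b - A) := h2
      _ < b := h5
      _ = a n := rfl
  exact lt_irrefl _ this
end
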